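/- Fixpoint characterization of least program models: let ⟨ℛ, Q, C⟩ be an admissible triple and P a SQCLP(ℛ,Q,C)-program. Then P has a least model M_P, i.e., a model of P contained (w.r.t. set inclusion) in every model of P, and M_P can be characterized as the least fixpoint of the interpretation transformer T_P; moreover M_P = lfp(T_P) = ⋃_{k ∈ ℕ} T_P^k(∅), where T_P^k denotes the k-fold iteration of T_P starting from the empty qc-interpretation. -/

import Mathlib

open scoped BigOperators

/-- A qualification domain: a bounded lattice equipped with an attenuation operation. -/
structure QualificationDomain (D : Type*) [Lattice D] [BoundedOrder D] where
  att : D → D → D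
  att_assoc : ∀ d e f : D, att (att d e) f = att d (att e f)
  att_comm : ∀ d e : D, att d e = att e d
  att_mono : ∀ d d' e e' : D, d ≤ d' → e ≤ e' → att d e ≤ att d' e'
  att_top : ∀ d : D, att d ⊤ = d
  att_bot : ∀ d : D, att d ⊥ = ⊥
  att_le : ∀ d e : D, att d e ≤ e
  att_ne_bot : ∀ d e : D, d ≠ ⊥ → e ≠ ⊥ → att d e ≠ ⊥
  att_inf : ∀ d e₁ e₂ : D, att d (e₁ ⊓ e₂) = att d e₁ ⊓ att d e₂

/-- First-order terms over variables `V` and data constructors `CS`. -/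
inductive Trm (V : Type*) (CS : Type*) : Type _
  | var : V → Trm V CS
  | app : CS → List (Trm V CS) → Trm V CS

variable {V CS DP PP : Type*}

/-- Application of a substitution to a term. -/
def Trm.subst (θ : V → Trm V CS) : Trm V CS → Trm V CS
  | .var X => θ X
  | .app c ts => .app c (ts.attach.map fun t => t.1.subst θ)
decreasing_by
  have := List.sizeOf_lt_of_mem t.2
  simp only [Trm.app.sizeOf_spec]
  omega

/-- Application of a valuation (ground substitution) to a term; ground terms are
terms over the empty set of variables. -/
def Trm.applyVal (η : V → Trm Empty CS) : Trm V CS → Trm Empty CS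
  | .var X => η X
  | .app c ts => .app c (ts.attach.map fun t => t.1.applyVal η)
decreasing_by
  have := List.sizeOf_lt_of_mem t.2
  simp only [Trm.app.sizeOf_spec]
  omega

variable {D : Type*} [Lattice D] [BoundedOrder D]

/-- The extension of a proximity relation on symbols to a proximity relation on terms:
`ext R (var X) (var X) = ⊤`, `ext R t s = ⊥` if exactly one of `t`, `s` is a variable or
they are applications of different arities, and
`ext R (c(t₁,…,tₙ)) (c'(s₁,…,sₙ)) = R c c' ⊓ ext R t₁ s₁ ⊓ ⋯ ⊓ ext R tₙ sₙ`. -/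
def Trm.ext [DecidableEq V] (R : CS → CS → D) : Trm V CS → Trm V CS → D
  | .var X, .var Y => if X = Y then (⊤ : D) else ⊥
  | .var _, .app _ _ => ⊥
  | .app _ _, .var _ => ⊥
  | .app c ts, .app c' ss =>
      if ts.length = ss.length then
        R c c' ⊓ ((ts.zip ss).attach.map (fun p => Trm.ext R p.1.1 p.1.2)).foldr (· ⊓ ·) ⊤
      else ⊥
termination_by t _ => sizeOf t
decreasing_by
  have h1 : p.1.1 ∈ ts := (List.of_mem_zip p.2).1
  have := List.sizeOf_lt_of_mem h1
  simp only [Trm.app.sizeOf_spec]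
  omega

/-- Constraints over terms: primitive atoms, equations, conjunction and
existential quantification. -/
inductive Constr (V CS PP : Type*) : Type _
  | prim : PP → List (Trm V CS) → Constr V CS PP
  | eq : Trm V CS → Trm V CS → Constr V CS PP
  | and : Constr V CS PP → Constr V CS PP → Constr V CS PP
  | ex : V → Constr V CS PP → Constr V CS PP

/-- Satisfaction of a constraint by a valuation, relative to an interpretation `pI` of the
primitive predicates over ground terms.  An equation is true iff both sides evaluate to the
same ground term. -/
def Constr.sat [DecidableEq V] (pI : PP → List (Trm Empty CS) → Prop)
    (η : V → Trm Empty CS) : Constr V CS PP → Prop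
  | .prim p ts => pI p (ts.map (Trm.applyVal η))
  | .eq t s => t.applyVal η = s.applyVal η
  | .and c₁ c₂ => c₁.sat pI η ∧ c₂.sat pI η
  | .ex X c => ∃ u : Trm Empty CS, c.sat pI (Function.update η X u)

/-- The set of solutions of a set of constraints. -/
def Sol [DecidableEq V] (pI : PP → List (Trm Empty CS) → Prop)
    (Pi : Set (Constr V CS PP)) : Set (V → Trm Empty CS) :=
  {η | ∀ c ∈ Pi, c.sat pI η}

/-- Entailment `Π ⊨_C π` of a constraint by a set of constraints. -/
def Entails [DecidableEq V] (pI : PP → List (Trm Empty CS) → Prop)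
    (Pi : Set (Constr V CS PP)) (c : Constr V CS PP) : Prop :=
  ∀ η ∈ Sol pI Pi, c.sat pI η

/-- Semantic form of the entailment `Π' ⊨_C Πθ`: every solution of `Π'`, composed with the
substitution `θ`, is a solution of `Π`. -/
def EntailsSubst [DecidableEq V] (pI : PP → List (Trm Empty CS) → Prop)
    (Pi' : Set (Constr V CS PP)) (θ : V → Trm V CS) (Pi : Set (Constr V CS PP)) : Prop :=
  ∀ η ∈ Sol pI Pi', (fun X => (θ X).applyVal η) ∈ Sol pI Pi

/-- Constraint-based term proximity: `t ≈_{d,Π} s` iff there are terms `t̂`, `ŝ` with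
`Π ⊨_C t == t̂`, `Π ⊨_C s == ŝ` and `ext R t̂ ŝ ⊒ d`. -/
def TermClose [DecidableEq V] (R : CS → CS → D) (pI : PP → List (Trm Empty CS) → Prop)
    (d : D) (Pi : Set (Constr V CS PP)) (t s : Trm V CS) : Prop :=
  ∃ th sh : Trm V CS,
    Entails pI Pi (Constr.eq t th) ∧ Entails pI Pi (Constr.eq s sh) ∧ d ≤ Trm.ext R th sh

/-- Atoms: defined atoms, primitive atoms and equations. -/
inductive Atom (V CS DP PP : Type*) : Type _
  | defd : DP → List (Trm V CS) → Atom V CS DP PP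
  | prim : PP → List (Trm V CS) → Atom V CS DP PP
  | eq : Trm V CS → Trm V CS → Atom V CS DP PP

/-- Application of a substitution to an atom. -/
def Atom.subst (θ : V → Trm V CS) : Atom V CS DP PP → Atom V CS DP PP
  | .defd r ts => .defd r (ts.map (Trm.subst θ))
  | .prim p ts => .prim p (ts.map (Trm.subst θ))
  | .eq t s => .eq (t.subst θ) (s.subst θ)

/-- A defined atom. -/
def Atom.IsDefined : Atom V CS DP PP → Prop
  | .defd _ _ => True
  | .prim _ _ => False
  | .eq _ _ => False

/-- A qualified constrained atom (qc-atom) `A#d ⇐ Π`. -/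
structure QCAtom (V CS DP PP D : Type*) where
  atom : Atom V CS DP PP
  deg : D
  cons : Set (Constr V CS PP)

/-- A qc-atom is observable iff its qualification value is not `⊥` and its constraint
set is satisfiable. -/
def Observable [DecidableEq V] (pI : PP → List (Trm Empty CS) → Prop)
    (φ : QCAtom V CS DP PP D) : Prop :=
  φ.deg ≠ ⊥ ∧ (Sol pI φ.cons).Nonempty

/-- The entailment relation `φ ⊨_{Q,C} φ'` between qc-atoms: there is a substitution `θ`
with `A' = Aθ`, `d' ⊑ d` and `Π' ⊨_C Πθ`. -/
def QCEntails [DecidableEq V] (pI : PP → List (Trm Empty CS) → Prop)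
    (φ φ' : QCAtom V CS DP PP D) : Prop :=
  ∃ θ : V → Trm V CS,
    φ'.atom = φ.atom.subst θ ∧ φ'.deg ≤ φ.deg ∧ EntailsSubst pI φ'.cons θ φ.cons

/-- A qc-interpretation: a set of defined observable qc-atoms closed under `⊨_{Q,C}`. -/
def IsInterp [DecidableEq V] (pI : PP → List (Trm Empty CS) → Prop)
    (I : Set (QCAtom V CS DP PP D)) : Prop :=
  (∀ φ ∈ I, φ.atom.IsDefined ∧ Observable pI φ) ∧
  (∀ φ ∈ I, ∀ φ' : QCAtom V CS DP PP D,
    QCEntails pI φ φ' → Observable pI φ' → φ' ∈ I)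

/-- Validity of an observable qc-atom in a qc-interpretation. -/
def Valid [DecidableEq V] (R : CS → CS → D) (pI : PP → List (Trm Empty CS) → Prop)
    (I : Set (QCAtom V CS DP PP D)) (φ : QCAtom V CS DP PP D) : Prop :=
  match φ.atom with
  | .defd _ _ => φ ∈ I
  | .prim p ts => Entails pI φ.cons (Constr.prim p ts)
  | .eq t s => TermClose R pI φ.deg φ.cons t s

/-- A `Q`-valued proximity relation on the symbols (variables, data constructors, defined
predicates, primitive predicates): it is determined by its restrictions to data constructors
and to defined predicate symbols, since it behaves as the identity on variables and is `⊥`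
between symbols of different kinds (and on primitive predicates it is only nonbottom between
equal symbols). -/
structure ProximityRel (D : Type*) [Lattice D] [BoundedOrder D] {CS DP : Type*}
    (arC : CS → ℕ) (arD : DP → ℕ) where
  dc : CS → CS → D
  dp : DP → DP → D
  dc_refl : ∀ c, dc c c = ⊤
  dc_symm : ∀ c c', dc c c' = dc c' c
  dc_arity : ∀ c c', dc c c' ≠ ⊥ → arC c = arC c'
  dp_refl : ∀ r, dp r r = ⊤
  dp_symm : ∀ r r', dp r r' = dp r' r
  dp_arity : ∀ r r', dp r r' ≠ ⊥ → arD r = arD r'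

/-- A program clause `p(t₁,…,tₙ) ←α– B₁#w₁, …, Bₘ#wₘ`; a threshold `wⱼ` is either `some w`
with `w ∈ D` or `none` (standing for `?`). -/
structure Clause (V CS DP PP D : Type*) where
  headPred : DP
  headArgs : List (Trm V CS)
  att : D
  body : List (Atom V CS DP PP × Option D)

/-- Well-formedness of a clause: the attenuation factor and all thresholds are `≠ ⊥`. -/
def ClauseWF (C : Clause V CS DP PP D) : Prop :=
  C.att ≠ ⊥ ∧ ∀ bw ∈ C.body, ∀ w, bw.2 = some w → w ≠ (⊥ : D)

/-- A SQCLP program: a set of well-formed clauses. -/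
def ProgWF (P : Set (Clause V CS DP PP D)) : Prop := ∀ C ∈ P, ClauseWF C

/-- `e ⊒? w`: trivially true for `w = ?`, and `w ⊑ e` otherwise. -/
def MeetsThreshold (e : D) : Option D → Prop
  | none => True
  | some w => w ≤ e

/-- The observable defined qc-atom `φ : p'(t'₁,…,t'ₙ)#d ⇐ Π` is an immediate consequence of
the qc-interpretation `I` via the clause `C`. -/
def ImmCons [DecidableEq V] (Q : QualificationDomain D) {arC : CS → ℕ} {arD : DP → ℕ}
    (Rl : ProximityRel D arC arD) (pI : PP → List (Trm Empty CS) → Prop)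
    (I : Set (QCAtom V CS DP PP D)) (C : Clause V CS DP PP D)
    (φ : QCAtom V CS DP PP D) : Prop :=
  ∃ (p' : DP) (ts' : List (Trm V CS)),
    φ.atom = Atom.defd p' ts' ∧ Observable pI φ ∧
    ∃ (θ : V → Trm V CS) (hn : C.headArgs.length = ts'.length)
      (ds : Fin ts'.length → D) (es : Fin C.body.length → D),
      Rl.dp p' C.headPred ≠ ⊥ ∧
      (∀ i, ds i ≠ ⊥) ∧ (∀ j, es j ≠ ⊥) ∧
      (∀ i : Fin ts'.length,
        TermClose Rl.dc pI (ds i) φ.cons (ts'.get i)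
          ((C.headArgs.get (Fin.cast hn.symm i)).subst θ)) ∧
      (∀ j : Fin C.body.length,
        Valid Rl.dc pI I ⟨((C.body.get j).1.subst θ), es j, φ.cons⟩) ∧
      (∀ j : Fin C.body.length, MeetsThreshold (es j) (C.body.get j).2) ∧
      φ.deg ≤ (Rl.dp p' C.headPred ⊓ Finset.univ.inf ds) ⊓ Q.att C.att (Finset.univ.inf es)

/-- The interpretation transformer `T_P`. -/
def Tp [DecidableEq V] (Q : QualificationDomain D) {arC : CS → ℕ} {arD : DP → ℕ}
    (Rl : ProximityRel D arC arD) (pI : PP → List (Trm Empty CS) → Prop)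
    (P : Set (Clause V CS DP PP D)) (I : Set (QCAtom V CS DP PP D)) :
    Set (QCAtom V CS DP PP D) :=
  {φ | ∃ C ∈ P, ImmCons Q Rl pI I C φ}

/-- `I` is a model of the clause `C`. -/
def ModelsClause [DecidableEq V] (Q : QualificationDomain D) {arC : CS → ℕ} {arD : DP → ℕ}
    (Rl : ProximityRel D arC arD) (pI : PP → List (Trm Empty CS) → Prop)
    (I : Set (QCAtom V CS DP PP D)) (C : Clause V CS DP PP D) : Prop :=
  ∀ φ, ImmCons Q Rl pI I C φ → φ ∈ I

/-- `I ⊨_{ℛ,Q,C} P` : `I` is a model of the program `P`. -/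
def ModelsProg [DecidableEq V] (Q : QualificationDomain D) {arC : CS → ℕ} {arD : DP → ℕ}
    (Rl : ProximityRel D arC arD) (pI : PP → List (Trm Empty CS) → Prop)
    (I : Set (QCAtom V CS DP PP D)) (P : Set (Clause V CS DP PP D)) : Prop :=
  ∀ C ∈ P, ModelsClause Q Rl pI I C

/-- Derivability `P ⊢_{ℛ,Q,C} φ` in the Proximity-based Qualified Constrained Horn Logic
SQCHL(ℛ,Q,C), with inference rules SQDA, SQEA and SQPA. -/
inductive Deriv [DecidableEq V] (Q : QualificationDomain D) {arC : CS → ℕ} {arD : DP → ℕ}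
    (Rl : ProximityRel D arC arD) (pI : PP → List (Trm Empty CS) → Prop)
    (P : Set (Clause V CS DP PP D)) : QCAtom V CS DP PP D → Prop
  | sqea : ∀ (d : D) (Pi : Set (Constr V CS PP)) (t s : Trm V CS),
      d ≠ ⊥ → TermClose Rl.dc pI d Pi t s → Deriv Q Rl pI P ⟨Atom.eq t s, d, Pi⟩
  | sqpa : ∀ (d : D) (Pi : Set (Constr V CS PP)) (p : PP) (ts : List (Trm V CS)),
      d ≠ ⊥ → Entails pI Pi (Constr.prim p ts) → Deriv Q Rl pI P ⟨Atom.prim p ts, d, Pi⟩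
  | sqda : ∀ (C : Clause V CS DP PP D), C ∈ P →
      ∀ (θ : V → Trm V CS) (p' : DP) (ts' : List (Trm V CS)) (d : D)
        (Pi : Set (Constr V CS PP)) (hn : C.headArgs.length = ts'.length)
        (ds : Fin ts'.length → D) (es : Fin C.body.length → D),
      Rl.dp p' C.headPred ≠ ⊥ →
      (∀ i, ds i ≠ ⊥) → (∀ j, es j ≠ ⊥) →
      (∀ i : Fin ts'.length,
        Deriv Q Rl pI P
          ⟨Atom.eq (ts'.get i) ((C.headArgs.get (Fin.cast hn.symm i)).subst θ), ds i, Pi⟩) →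
      (∀ j : Fin C.body.length,
        Deriv Q Rl pI P ⟨((C.body.get j).1.subst θ), es j, Pi⟩) →
      (∀ j : Fin C.body.length, MeetsThreshold (es j) (C.body.get j).2) →
      d ≤ (Rl.dp p' C.headPred ⊓ Finset.univ.inf ds) ⊓ Q.att C.att (Finset.univ.inf es) →
      Deriv Q Rl pI P ⟨Atom.defd p' ts', d, Pi⟩


/-!
Models of `P` are exactly the prefixed points `T_P(I) ⊆ I` of the monotone operator `T_P` on
the complete lattice of all sets of qc-atoms, so its least fixpoint (Knaster–Tarski) is
contained in every model and every fixpoint. Since clause bodies are finite, an immediate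
consequence of a directed union is already one of a single member, i.e. `T_P` is
ω-Scott-continuous, and Kleene's theorem gives `lfp(T_P) = ⋃ₖ T_P^k(∅)`. This set is a
qc-interpretation because `≈_{d,Π}` and `⊨_C` are stable under substitution, so `T_P` preserves
closure under `⊨_{Q,C}`, and unions of interpretations are interpretations.
-/

theorem List.le_foldr_inf_map {α : Type*} {l : List α} {f : α → D} {b : D}
    (h : ∀ a ∈ l, b ≤ f a) : b ≤ (l.map f).foldr (· ⊓ ·) ⊤ := by
  induction l with
  | nil => exact le_top
  | cons a l ih => exact le_inf (h a (by simp)) (ih fun a ha => h a (by simp [ha]))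

theorem List.foldr_inf_map_mono {α : Type*} {l : List α} {f g : α → D}
    (h : ∀ a ∈ l, f a ≤ g a) : (l.map f).foldr (· ⊓ ·) ⊤ ≤ (l.map g).foldr (· ⊓ ·) ⊤ := by
  induction l with
  | nil => exact le_rfl
  | cons a l ih => exact inf_le_inf (h a (by simp)) (ih fun a ha => h a (by simp [ha]))

theorem Fin.inf_univ_comp_cast {n m : ℕ} (h : m = n) (f : Fin n → D) :
    Finset.univ.inf (f ∘ Fin.cast h) = Finset.univ.inf f := by
  subst h
  rfl

theorem List.zip_self {α : Type*} (l : List α) : l.zip l = l.map fun a => (a, a) := by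
  induction l with
  | nil => rfl
  | cons a l ih => simp [ih]

namespace Trm

theorem subst_app (θ : V → Trm V CS) (c : CS) (ts : List (Trm V CS)) :
    (app c ts).subst θ = app c (ts.map (subst θ)) := by
  rw [subst, List.attach_map_val (f := subst θ)]

theorem applyVal_app (η : V → Trm Empty CS) (c : CS) (ts : List (Trm V CS)) :
    (app c ts).applyVal η = app c (ts.map (applyVal η)) := by
  rw [applyVal, List.attach_map_val (f := applyVal η)]

theorem ext_app [DecidableEq V] (R : CS → CS → D) (c c' : CS) (ts ss : List (Trm V CS)) :
    ext R (app c ts) (app c' ss) =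
      if ts.length = ss.length then
        R c c' ⊓ ((ts.zip ss).map fun p => ext R p.1 p.2).foldr (· ⊓ ·) ⊤
      else ⊥ := by
  rw [ext,
    List.attach_map_val (l := ts.zip ss) (f := fun p : Trm V CS × Trm V CS => ext R p.1 p.2)]

theorem sizeOf_lt_of_mem {t : Trm V CS} {c : CS} {ts : List (Trm V CS)} (h : t ∈ ts) :
    sizeOf t < sizeOf (app c ts) := by
  have := List.sizeOf_lt_of_mem h
  simp only [app.sizeOf_spec]
  omega

theorem applyVal_subst (θ : V → Trm V CS) (η : V → Trm Empty CS) (t : Trm V CS) :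
    (t.subst θ).applyVal η = t.applyVal fun X => (θ X).applyVal η := by
  match t with
  | var X => simp [subst, applyVal]
  | app c ts =>
    rw [subst_app, applyVal_app, applyVal_app, List.map_map]
    exact congrArg _ (List.map_congr_left fun a _ => applyVal_subst θ η a)
termination_by sizeOf t
decreasing_by exact sizeOf_lt_of_mem ‹_›

theorem subst_subst (θ θ' : V → Trm V CS) (t : Trm V CS) :
    (t.subst θ).subst θ' = t.subst fun X => (θ X).subst θ' := by
  match t with
  | var X => simp [subst]
  | app c ts =>
    rw [subst_app, subst_app, subst_app, List.map_map]
    exact congrArg _ (List.map_congr_left fun a _ => subst_subst θ θ' a)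
termination_by sizeOf t
decreasing_by exact sizeOf_lt_of_mem ‹_›

variable [DecidableEq V] {R : CS → CS → D}

theorem ext_self (hR : ∀ c, R c c = ⊤) (t : Trm V CS) : ext R t t = ⊤ := by
  match t with
  | var X => simp [ext]
  | app c ts =>
    rw [ext_app, if_pos rfl, hR, top_inf_eq, List.zip_self, List.map_map, eq_top_iff]
    exact List.le_foldr_inf_map fun a _ => (ext_self hR a).ge
termination_by sizeOf t
decreasing_by exact sizeOf_lt_of_mem ‹_›

theorem ext_le_ext_subst (hR : ∀ c, R c c = ⊤) (θ : V → Trm V CS) (t s : Trm V CS) :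
    ext R t s ≤ ext R (t.subst θ) (s.subst θ) := by
  match t, s with
  | var X, var Y =>
    by_cases h : X = Y
    · subst h
      rw [ext_self hR, ext_self hR]
    · simp [ext, h]
  | var X, app c ss => simp [ext]
  | app c ts, var Y => simp [ext]
  | app c ts, app c' ss =>
    by_cases h : ts.length = ss.length
    · rw [subst_app, subst_app, ext_app, ext_app, if_pos h, if_pos (by simp [h]),
        List.zip_map, List.map_map]
      exact inf_le_inf le_rfl (List.foldr_inf_map_mono fun p _ => ext_le_ext_subst hR θ p.1 p.2)
    · rw [ext_app, if_neg h]
      exact bot_le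
termination_by sizeOf t
decreasing_by exact sizeOf_lt_of_mem (List.of_mem_zip ‹_›).1

end Trm

theorem Atom.subst_subst (θ θ' : V → Trm V CS) (A : Atom V CS DP PP) :
    (A.subst θ).subst θ' = A.subst fun X => (θ X).subst θ' := by
  cases A <;> simp [Atom.subst, Function.comp_def, Trm.subst_subst]

section Semantics

variable [DecidableEq V] {pI : PP → List (Trm Empty CS) → Prop}

theorem Constr.sat_eq_subst (θ : V → Trm V CS) (η : V → Trm Empty CS) (t s : Trm V CS) :
    (Constr.eq (t.subst θ) (s.subst θ) : Constr V CS PP).sat pI η ↔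
      (Constr.eq t s : Constr V CS PP).sat pI fun X => (θ X).applyVal η := by
  simp only [Constr.sat, Trm.applyVal_subst]

theorem Entails.subst_prim {Pi Pi' : Set (Constr V CS PP)} {θ : V → Trm V CS}
    {p : PP} {ts : List (Trm V CS)}
    (h : Entails pI Pi (Constr.prim p ts)) (hθ : EntailsSubst pI Pi' θ Pi) :
    Entails pI Pi' (Constr.prim p (ts.map (Trm.subst θ))) := by
  intro η hη
  simpa only [Constr.sat, List.map_map, Function.comp_def, Trm.applyVal_subst]
    using h _ (hθ η hη)

theorem TermClose.subst {R : CS → CS → D} (hR : ∀ c, R c c = ⊤)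
    {d : D} {Pi Pi' : Set (Constr V CS PP)} {θ : V → Trm V CS} {t s : Trm V CS}
    (h : TermClose R pI d Pi t s) (hθ : EntailsSubst pI Pi' θ Pi) :
    TermClose R pI d Pi' (t.subst θ) (s.subst θ) := by
  obtain ⟨th, sh, hth, hsh, hd⟩ := h
  exact ⟨th.subst θ, sh.subst θ, fun η hη => (Constr.sat_eq_subst θ η t th).2 (hth _ (hθ η hη)),
    fun η hη => (Constr.sat_eq_subst θ η s sh).2 (hsh _ (hθ η hη)),
    hd.trans (Trm.ext_le_ext_subst hR θ th sh)⟩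

theorem Valid.mono {R : CS → CS → D} {I J : Set (QCAtom V CS DP PP D)} (hIJ : I ⊆ J)
    {A : Atom V CS DP PP} {d : D} {Pi : Set (Constr V CS PP)}
    (h : Valid R pI I ⟨A, d, Pi⟩) : Valid R pI J ⟨A, d, Pi⟩ := by
  cases A with
  | defd r ts => exact hIJ h
  | prim p ts => exact h
  | eq t s => exact h

theorem Valid.exists_of_mem_iUnion {R : CS → CS → D} {ι : Type*} [Nonempty ι]
    {I : ι → Set (QCAtom V CS DP PP D)} {A : Atom V CS DP PP} {d : D}
    {Pi : Set (Constr V CS PP)} (h : Valid R pI (⋃ i, I i) ⟨A, d, Pi⟩) :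
    ∃ i, Valid R pI (I i) ⟨A, d, Pi⟩ := by
  cases A with
  | defd r ts => exact Set.mem_iUnion.1 h
  | prim p ts => exact ⟨Classical.arbitrary ι, h⟩
  | eq t s => exact ⟨Classical.arbitrary ι, h⟩

theorem Valid.subst {R : CS → CS → D} (hR : ∀ c, R c c = ⊤) {I : Set (QCAtom V CS DP PP D)}
    (hI : IsInterp pI I) {A : Atom V CS DP PP} {d : D} {Pi Pi' : Set (Constr V CS PP)}
    {θ : V → Trm V CS} (h : Valid R pI I ⟨A, d, Pi⟩) (hθ : EntailsSubst pI Pi' θ Pi)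
    (hobs : Observable pI (⟨A.subst θ, d, Pi'⟩ : QCAtom V CS DP PP D)) :
    Valid R pI I ⟨A.subst θ, d, Pi'⟩ := by
  cases A with
  | defd r ts => exact hI.2 _ h _ ⟨θ, rfl, le_rfl, hθ⟩ hobs
  | prim p ts => exact Entails.subst_prim h hθ
  | eq t s => exact TermClose.subst hR h hθ

end Semantics

section Transformer

variable [DecidableEq V] {arC : CS → ℕ} {arD : DP → ℕ} {Q : QualificationDomain D}
  {Rl : ProximityRel D arC arD} {pI : PP → List (Trm Empty CS) → Prop}

theorem ImmCons.mono {I J : Set (QCAtom V CS DP PP D)} (hIJ : I ⊆ J) {C : Clause V CS DP PP D}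
    {φ : QCAtom V CS DP PP D} (h : ImmCons Q Rl pI I C φ) : ImmCons Q Rl pI J C φ := by
  obtain ⟨p', ts', hφ, hobs, θ, hn, ds, es, hd₀, hds, hes, hclose, hvalid, hthr, hdeg⟩ := h
  exact ⟨p', ts', hφ, hobs, θ, hn, ds, es, hd₀, hds, hes, hclose,
    fun j => (hvalid j).mono hIJ, hthr, hdeg⟩

theorem ImmCons.of_qcEntails {I : Set (QCAtom V CS DP PP D)} (hI : IsInterp pI I)
    {C : Clause V CS DP PP D} {φ φ' : QCAtom V CS DP PP D} (h : ImmCons Q Rl pI I C φ)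
    (hφφ' : QCEntails pI φ φ') (hobs : Observable pI φ') : ImmCons Q Rl pI I C φ' := by
  obtain ⟨p', ts', hφ, -, θ, hn, ds, es, hd₀, hds, hes, hclose, hvalid, hthr, hdeg⟩ := h
  obtain ⟨θ', hφ', hdeg', hθ'⟩ := hφφ'
  have hlen : (ts'.map (Trm.subst θ')).length = ts'.length := List.length_map _
  refine ⟨p', ts'.map (Trm.subst θ'), by rw [hφ', hφ]; rfl, hobs, fun X => (θ X).subst θ',
    by simpa using hn, ds ∘ Fin.cast hlen, es, hd₀, fun i => hds _, hes, fun i => ?_,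
    fun j => ?_, hthr, ?_⟩
  · rw [List.get_eq_getElem, List.getElem_map, ← Trm.subst_subst]
    exact (hclose (Fin.cast hlen i)).subst Rl.dc_refl hθ'
  · rw [← Atom.subst_subst]
    exact (hvalid j).subst Rl.dc_refl hI hθ' ⟨hes j, hobs.2⟩
  · rw [Fin.inf_univ_comp_cast]
    exact hdeg'.trans hdeg

theorem ImmCons.exists_of_iUnion {ι : Type*} [Nonempty ι] {I : ι → Set (QCAtom V CS DP PP D)}
    (hI : Directed (· ⊆ ·) I) {C : Clause V CS DP PP D} {φ : QCAtom V CS DP PP D}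
    (h : ImmCons Q Rl pI (⋃ i, I i) C φ) : ∃ i, ImmCons Q Rl pI (I i) C φ := by
  classical
  obtain ⟨p', ts', hφ, hobs, θ, hn, ds, es, hd₀, hds, hes, hclose, hvalid, hthr, hdeg⟩ := h
  choose k hk using fun j => (hvalid j).exists_of_mem_iUnion
  obtain ⟨i, hi⟩ := hI.finset_le (Finset.univ.image k)
  exact ⟨i, p', ts', hφ, hobs, θ, hn, ds, es, hd₀, hds, hes, hclose,
    fun j => (hk j).mono (hi _ (Finset.mem_image_of_mem k (Finset.mem_univ j))), hthr, hdeg⟩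

theorem Tp_mono (P : Set (Clause V CS DP PP D)) : Monotone (Tp Q Rl pI P) :=
  fun _ _ hIJ _ ⟨C, hC, h⟩ => ⟨C, hC, h.mono hIJ⟩

theorem Tp_iUnion_subset (P : Set (Clause V CS DP PP D)) {ι : Type*} [Nonempty ι]
    {I : ι → Set (QCAtom V CS DP PP D)} (hI : Directed (· ⊆ ·) I) :
    Tp Q Rl pI P (⋃ i, I i) ⊆ ⋃ i, Tp Q Rl pI P (I i) := by
  rintro φ ⟨C, hC, h⟩
  obtain ⟨i, hi⟩ := h.exists_of_iUnion hI
  exact Set.mem_iUnion.2 ⟨i, C, hC, hi⟩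

theorem modelsProg_iff_Tp_subset (P : Set (Clause V CS DP PP D))
    (I : Set (QCAtom V CS DP PP D)) : ModelsProg Q Rl pI I P ↔ Tp Q Rl pI P I ⊆ I :=
  ⟨fun hI _ ⟨C, hC, h⟩ => hI C hC _ h, fun hI C hC _ h => hI ⟨C, hC, h⟩⟩

theorem isInterp_empty : IsInterp pI (∅ : Set (QCAtom V CS DP PP D)) :=
  ⟨fun _ h => h.elim, fun _ h => h.elim⟩

theorem isInterp_iUnion {ι : Type*} {I : ι → Set (QCAtom V CS DP PP D)}
    (hI : ∀ i, IsInterp pI (I i)) : IsInterp pI (⋃ i, I i) := by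
  constructor
  · intro φ hφ
    obtain ⟨i, hi⟩ := Set.mem_iUnion.1 hφ
    exact (hI i).1 φ hi
  · intro φ hφ φ' hφφ' hobs
    obtain ⟨i, hi⟩ := Set.mem_iUnion.1 hφ
    exact Set.mem_iUnion.2 ⟨i, (hI i).2 φ hi φ' hφφ' hobs⟩

theorem IsInterp.Tp (P : Set (Clause V CS DP PP D)) {I : Set (QCAtom V CS DP PP D)}
    (hI : IsInterp pI I) : IsInterp pI (Tp Q Rl pI P I) := by
  constructor
  · rintro φ ⟨C, -, p', ts', hφ, hobs, -⟩
    exact ⟨by rw [hφ]; trivial, hobs⟩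
  · rintro φ ⟨C, hC, h⟩ φ' hφφ' hobs
    exact ⟨C, hC, h.of_qcEntails hI hφφ' hobs⟩

theorem isInterp_iterate_Tp_empty (P : Set (Clause V CS DP PP D)) (k : ℕ) :
    IsInterp pI ((Tp Q Rl pI P)^[k] ∅) := by
  induction k with
  | zero => exact isInterp_empty
  | succ k ih =>
    rw [Function.iterate_succ_apply']
    exact ih.Tp P

variable (Q Rl pI)

def TpHom (P : Set (Clause V CS DP PP D)) :
    Set (QCAtom V CS DP PP D) →o Set (QCAtom V CS DP PP D) :=
  ⟨Tp Q Rl pI P, Tp_mono P⟩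

open OmegaCompletePartialOrder in
theorem ωScottContinuous_TpHom (P : Set (Clause V CS DP PP D)) :
    ωScottContinuous (TpHom Q Rl pI P) := by
  refine ωScottContinuous.of_map_ωSup_of_orderHom fun c => ?_
  rw [← ωSup_eq_of_isLUB isLUB_iSup, ← ωSup_eq_of_isLUB isLUB_iSup]
  exact le_antisymm (Tp_iUnion_subset P c.monotone.directed_le)
    (iSup_le fun n => (TpHom Q Rl pI P).mono (le_iSup c n))

end Transformer

section Theorems

variable {V CS DP PP D : Type*} [DecidableEq V] [Lattice D] [BoundedOrder D]
variable {arC : CS → ℕ} {arD : DP → ℕ}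

theorem least_model_fixpoint_characterization_general
    (Q : QualificationDomain D) (Rl : ProximityRel D arC arD)
    (pI : PP → List (Trm Empty CS) → Prop)
    (P : Set (Clause V CS DP PP D)) :
    ∃ M : Set (QCAtom V CS DP PP D),
      IsInterp pI M ∧ ModelsProg Q Rl pI M P ∧
      (∀ I, IsInterp pI I → ModelsProg Q Rl pI I P → M ⊆ I) ∧
      Tp Q Rl pI P M = M ∧
      (∀ I, IsInterp pI I → Tp Q Rl pI P I = I → M ⊆ I) ∧
      M = ⋃ k : ℕ, (Tp Q Rl pI P)^[k] ∅ := by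
  set T := TpHom Q Rl pI P
  have hkleene : T.lfp = ⋃ k : ℕ, (Tp Q Rl pI P)^[k] ∅ :=
    fixedPoints.lfp_eq_sSup_iterate T (ωScottContinuous_TpHom Q Rl pI P)
  have hleast : ∀ I, Tp Q Rl pI P I ⊆ I → T.lfp ⊆ I := fun _ => T.lfp_le
  refine ⟨T.lfp, ?_, (modelsProg_iff_Tp_subset P _).2 T.map_lfp.le,
    fun I _ hI => hleast I ((modelsProg_iff_Tp_subset P I).1 hI), T.map_lfp,
    fun I _ hI => hleast I hI.le, hkleene⟩
  rw [hkleene]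
  exact isInterp_iUnion (isInterp_iterate_Tp_empty P)

/-- Fixpoint characterization of least program models: every program `P`
has a least model `M_P`, which is the least fixpoint of `T_P` and equals
`⋃_{k ∈ ℕ} T_P^k(∅)`. -/
theorem least_model_fixpoint_characterization
    (Q : QualificationDomain D) (Rl : ProximityRel D arC arD)
    (pI : PP → List (Trm Empty CS) → Prop)
    (P : Set (Clause V CS DP PP D)) (hP : ProgWF P) :
    ∃ M : Set (QCAtom V CS DP PP D),
      IsInterp pI M ∧ ModelsProg Q Rl pI M P ∧
      (∀ I, IsInterp pI I → ModelsProg Q Rl pI I P → M ⊆ I) ∧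
      Tp Q Rl pI P M = M ∧
      (∀ I, IsInterp pI I → Tp Q Rl pI P I = I → M ⊆ I) ∧
      M = ⋃ k : ℕ, (Tp Q Rl pI P)^[k] ∅ :=
  least_model_fixpoint_characterization_general Q Rl pI P

end Theorems
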